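/- Let N ≥ 1 be an integer, Ω a measurable subset of ℝ^N, and let p, q, α, B be real numbers with 2 ≤ p < q, α > 0 and B > 0. Let u : ℝ^N → ℝ be continuously differentiable with compact support contained in Ω, and assume the embedding-type inequality (∫_Ω |u(x)|^{q+α} dx)^{1/(q+α)} ≤ B · (∫_Ω ‖∇u(x)‖^p dx)^{1/p}. If ∫_Ω ‖∇u(x)‖^p dx > 0 and I(u) = 0 (i.e. u lies on the Nehari manifold), then J(u) > ((q−p)/(p·q)) · r(α)^p. -/

import Mathlib

/-!
On the Nehari manifold `∫ ‖∇u‖^p = ∫ |u|^q ln |u|`, so `J(u) = (q-p)/(pq) ∫ ‖∇u‖^p + (1/q²) ∫ |u|^q`,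
and the last term is positive. From `ln t ≤ t^α / α` and the embedding inequality,
`α ∫ ‖∇u‖^p ≤ ∫ |u|^(q+α) ≤ B^(q+α) (∫ ‖∇u‖^p)^((q+α)/p)`; since `q + α > p` this forces
`∫ ‖∇u‖^p ≥ r(α)^p`.
-/

open MeasureTheory Real

lemma rpow_mul_log_le_rpow_add_div {t : ℝ} (ht : 0 ≤ t) (q : ℝ) {α : ℝ} (hα : 0 < α) :
    t ^ q * log t ≤ t ^ (q + α) / α := by
  rcases ht.eq_or_lt with rfl | ht
  · simp only [log_zero, mul_zero]
    positivity
  calc t ^ q * log t ≤ t ^ q * (t ^ α / α) :=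
        mul_le_mul_of_nonneg_left (log_le_rpow_div ht.le hα) (by positivity)
    _ = t ^ (q + α) / α := by rw [rpow_add ht, mul_div_assoc]

lemma continuous_abs_rpow_mul_log {q : ℝ} (hq : 1 ≤ q) :
    Continuous fun t : ℝ => |t| ^ q * log |t| := by
  have h : (fun t : ℝ => |t| ^ q * log |t|) = fun t => |t| ^ (q - 1) * (|t| * log |t|) := by
    funext t
    rcases eq_or_ne t 0 with rfl | ht
    · simp
    · rw [← mul_assoc, ← rpow_add_one (abs_ne_zero.mpr ht), sub_add_cancel]
  rw [h]
  exact (continuous_abs.rpow_const fun _ => Or.inr (by linarith)).mul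
    (continuous_mul_log.comp continuous_abs)

lemma rpow_le_of_mul_le_of_rpow_le {p s α B G R : ℝ} (hp : 0 < p) (hps : p < s) (hα : 0 ≤ α)
    (hB : 0 < B) (hG : 0 < G) (hαR : α * G ≤ R) (hRB : R ^ (1 / s) ≤ B * G ^ (1 / p)) :
    ((α / B ^ s) ^ (1 / (s - p))) ^ p ≤ G := by
  set g := G ^ (1 / p) with hg_def
  have hg : 0 < g := by positivity
  have hs : 0 < s := hp.trans hps
  have hG_eq : G = g ^ p := by rw [hg_def, one_div, rpow_inv_rpow hG.le hp.ne']
  have hR : R ≤ B ^ s * g ^ s := by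
    have hR0 : 0 ≤ R := (mul_nonneg hα hG.le).trans hαR
    calc R = (R ^ (1 / s)) ^ s := by rw [one_div, rpow_inv_rpow hR0 hs.ne']
      _ ≤ (B * g) ^ s := by gcongr
      _ = B ^ s * g ^ s := mul_rpow hB.le hg.le
  have hαg : α / B ^ s ≤ g ^ (s - p) := by
    rw [div_le_iff₀ (by positivity)]
    refine le_of_mul_le_mul_right ?_ (rpow_pos_of_pos hg p)
    calc α * g ^ p ≤ B ^ s * g ^ s := hG_eq ▸ hαR.trans hR
      _ = g ^ (s - p) * B ^ s * g ^ p := by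
        rw [mul_comm _ (B ^ s), mul_assoc, ← rpow_add hg, sub_add_cancel]
  calc ((α / B ^ s) ^ (1 / (s - p))) ^ p ≤ ((g ^ (s - p)) ^ (1 / (s - p))) ^ p := by gcongr
    _ = G := by rw [one_div, rpow_rpow_inv hg.le (sub_pos.mpr hps).ne', hG_eq]

lemma mul_integral_abs_rpow_mul_log_le {X : Type*} [MeasurableSpace X] {μ : Measure X}
    {u : X → ℝ} {q α : ℝ} (hα : 0 < α) (hL : Integrable (fun x => |u x| ^ q * log |u x|) μ)
    (hR : Integrable (fun x => |u x| ^ (q + α)) μ) :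
    α * ∫ x, |u x| ^ q * log |u x| ∂μ ≤ ∫ x, |u x| ^ (q + α) ∂μ := by
  rw [← le_div_iff₀' hα, ← integral_div]
  exact integral_mono hL (hR.div_const α) fun x =>
    rpow_mul_log_le_rpow_add_div (abs_nonneg _) q hα

section ContinuousCompactSupport

variable {X : Type*} [TopologicalSpace X] [MeasurableSpace X] {μ : Measure X} {u : X → ℝ}

lemma Continuous.integrable_comp_of_hasCompactSupport [OpensMeasurableSpace X]
    [IsFiniteMeasureOnCompacts μ] (hu : Continuous u) (hcs : HasCompactSupport u) {g : ℝ → ℝ}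
    (hg : Continuous g) (hg0 : g 0 = 0) : Integrable (fun x => g (u x)) μ :=
  (hg.comp hu).integrable_of_hasCompactSupport (hcs.comp_left hg0)

lemma setIntegral_abs_rpow_pos [μ.IsOpenPosMeasure] {Ω : Set X} {q : ℝ}
    (hu : Continuous u) (hne : u ≠ 0) (hsupp : tsupport u ⊆ Ω) (hq : q ≠ 0)
    (hint : Integrable (fun x => |u x| ^ q) μ) : 0 < ∫ x in Ω, |u x| ^ q ∂μ := by
  have hsupport : Function.support (fun x => |u x| ^ q) = Function.support u := by
    ext x
    simp [rpow_eq_zero (abs_nonneg _) hq]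
  rw [setIntegral_eq_integral_of_forall_compl_eq_zero fun x hx => by
      simp [image_eq_zero_of_notMem_tsupport (Set.notMem_subset hsupp hx), zero_rpow hq],
    integral_pos_iff_support_of_nonneg (fun x => by positivity) hint, hsupport]
  exact hu.isOpen_support.measure_pos μ (Function.support_nonempty_iff.mpr hne)

end ContinuousCompactSupport

lemma energy_eq_nehari_add {p q G L Q : ℝ} (hp : p ≠ 0) (hq : q ≠ 0) :
    1 / p * G - 1 / q * L + 1 / q ^ 2 * Q =
      1 / q * (G - L) + (q - p) / (p * q) * G + 1 / q ^ 2 * Q := by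
  field_simp
  ring

theorem energy_gt_of_nehari_zero_general {N : ℕ} (Ω : Set (EuclideanSpace ℝ (Fin N)))
    (p q α B : ℝ)
    (hp : 2 ≤ p) (hpq : p < q) (hα : 0 < α) (hB : 0 < B)
    (u : EuclideanSpace ℝ (Fin N) → ℝ)
    (hu : ContDiff ℝ 1 u) (hcs : HasCompactSupport u) (hsupp : tsupport u ⊆ Ω)
    (hemb : (∫ x in Ω, |u x| ^ (q + α)) ^ (1 / (q + α)) ≤
      B * (∫ x in Ω, ‖fderiv ℝ u x‖ ^ p) ^ (1 / p))
    (hgrad : 0 < ∫ x in Ω, ‖fderiv ℝ u x‖ ^ p)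
    (hI : (∫ x in Ω, ‖fderiv ℝ u x‖ ^ p) - (∫ x in Ω, |u x| ^ q * Real.log |u x|) = 0) :
    ((q - p) / (p * q)) * ((α / B ^ (q + α)) ^ (1 / (q + α - p))) ^ p <
      (1 / p) * (∫ x in Ω, ‖fderiv ℝ u x‖ ^ p)
        - (1 / q) * (∫ x in Ω, |u x| ^ q * Real.log |u x|)
        + (1 / q ^ 2) * (∫ x in Ω, |u x| ^ q) := by
  have hp0 : 0 < p := by linarith
  have hq0 : 0 < q := by linarith
  have hcont := hu.continuous
  have hu0 : u ≠ 0 := by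
    rintro rfl
    simp [zero_rpow hp0.ne'] at hgrad
  have hαG : α * ∫ x in Ω, ‖fderiv ℝ u x‖ ^ p ≤ ∫ x in Ω, |u x| ^ (q + α) := by
    rw [sub_eq_zero.mp hI]
    refine mul_integral_abs_rpow_mul_log_le hα ?_ ?_
    · exact (hcont.integrable_comp_of_hasCompactSupport hcs
        (continuous_abs_rpow_mul_log (by linarith)) (by simp)).integrableOn
    · have hqα : 0 < q + α := by linarith
      exact (hcont.integrable_comp_of_hasCompactSupport hcs
        (continuous_abs.rpow_const fun _ => Or.inr hqα.le)
        (by simp [zero_rpow hqα.ne'])).integrableOn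
  have hG_ge := rpow_le_of_mul_le_of_rpow_le hp0 (by linarith) hα.le hB hgrad hαG hemb
  have hQ : 0 < ∫ x in Ω, |u x| ^ q := setIntegral_abs_rpow_pos hcont hu0 hsupp hq0.ne'
    (hcont.integrable_comp_of_hasCompactSupport hcs
      (continuous_abs.rpow_const fun _ => Or.inr hq0.le) (by simp [zero_rpow hq0.ne']))
  rw [energy_eq_nehari_add hp0.ne' hq0.ne', hI, mul_zero, zero_add]
  calc (q - p) / (p * q) * ((α / B ^ (q + α)) ^ (1 / (q + α - p))) ^ p
      ≤ (q - p) / (p * q) * ∫ x in Ω, ‖fderiv ℝ u x‖ ^ p := by gcongr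
    _ < _ := lt_add_of_pos_right _ (by positivity)

theorem energy_gt_of_nehari_zero {N : ℕ} (hN : 1 ≤ N) (Ω : Set (EuclideanSpace ℝ (Fin N)))
    (hΩ : MeasurableSet Ω) (p q α B : ℝ)
    (hp : 2 ≤ p) (hpq : p < q) (hα : 0 < α) (hB : 0 < B)
    (u : EuclideanSpace ℝ (Fin N) → ℝ)
    (hu : ContDiff ℝ 1 u) (hcs : HasCompactSupport u) (hsupp : tsupport u ⊆ Ω)
    (hemb : (∫ x in Ω, |u x| ^ (q + α)) ^ (1 / (q + α)) ≤
      B * (∫ x in Ω, ‖fderiv ℝ u x‖ ^ p) ^ (1 / p))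
    (hgrad : 0 < ∫ x in Ω, ‖fderiv ℝ u x‖ ^ p)
    (hI : (∫ x in Ω, ‖fderiv ℝ u x‖ ^ p) - (∫ x in Ω, |u x| ^ q * Real.log |u x|) = 0) :
    ((q - p) / (p * q)) * ((α / B ^ (q + α)) ^ (1 / (q + α - p))) ^ p <
      (1 / p) * (∫ x in Ω, ‖fderiv ℝ u x‖ ^ p)
        - (1 / q) * (∫ x in Ω, |u x| ^ q * Real.log |u x|)
        + (1 / q ^ 2) * (∫ x in Ω, |u x| ^ q) :=
  energy_gt_of_nehari_zero_general Ω p q α B hp hpq hα hB u hu hcs hsupp hemb hgrad hI
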